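/- In the adding-voters construction (candidates B ∪ {w,x}; k−1 registered voters approving only x; unregistered voter w_i approving B − N_c[b_i] then w), for any subset W' of the unregistered voters with ‖W'‖ = k corresponding to a dominating set of G: in the election with voters V ∪ W' there are 2k−1 voters, candidate w has overall approval score k (a strict majority), every other candidate has overall approval score at most k−1, and w is the unique fallback voting winner. -/

import Mathlib

/-! The `k` added voters all approve `w`, so `w` reaches `k` approvals out of `2k - 1`, a strict
majority, once every ballot is read to its end. The `k - 1` registered voters give `x` exactly
`k - 1` approvals, and a vertex candidate `b` is disapproved by the added voter of a vertex
dominating `b`, so it too stays at `k - 1` or fewer. Hence no other candidate ever reaches a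
strict majority, at any level, and `w` wins alone at the first level where it has one. -/

/- Fallback voting framework.  A ballot is the linearly ordered list of a voter's
approved candidates (most preferred first); an election is a list of ballots. -/
namespace FV

variable {α : Type*} [DecidableEq α]

/-- The level-`i` score of candidate `c`: the number of voters who approve `c`
and rank `c` among their top `i` approved candidates. -/
def levelScore (V : List (List α)) (i : ℕ) (c : α) : ℕ :=
  (V.filter (fun b => decide (c ∈ b.take i))).length

/-- The overall approval score of candidate `c`. -/
def score (V : List (List α)) (c : α) : ℕ :=
  (V.filter (fun b => decide (c ∈ b))).length

/-- `c` has a strict majority of approvals at level `i`. -/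
def MajAt (V : List (List α)) (i : ℕ) (c : α) : Prop :=
  2 * levelScore V i c > V.length

/-- `c` is a fallback voting winner of the election with candidate set `Cs`
and voter list `V`:  either at the first level (up to `‖Cs‖`) at which some
candidate attains a strict majority, `c` has a strict majority and maximal
level score among strict-majority candidates; or no candidate ever attains a
strict majority and `c` has maximal overall approval score. -/
def FVWinner (Cs : Finset α) (V : List (List α)) (c : α) : Prop :=
  c ∈ Cs ∧
    ((∃ i, 1 ≤ i ∧ i ≤ Cs.card ∧ MajAt V i c ∧
        (∀ j, j < i → ∀ d ∈ Cs, ¬ MajAt V j d) ∧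
        (∀ d ∈ Cs, MajAt V i d → levelScore V i d ≤ levelScore V i c)) ∨
     ((∀ i, i ≤ Cs.card → ∀ d ∈ Cs, ¬ MajAt V i d) ∧
        ∀ d ∈ Cs, score V d ≤ score V c))

/-- `c` is the unique fallback voting winner. -/
def UniqueFVWinner (Cs : Finset α) (V : List (List α)) (c : α) : Prop :=
  FVWinner Cs V c ∧ ∀ d, FVWinner Cs V d → d = c

end FV

/- The adding-voters construction of Erdélyi and Fellows.  Candidates are
`Sum (Fin n) Bool`: `Sum.inl b` is the vertex candidate for `b`, `Sum.inr
true` is `w` and `Sum.inr false` is `x`.  There are `k-1` registered voters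
approving only `x`; the unregistered voter `wᵢ` approves the candidates of
`B − N_c[bᵢ]` (in a fixed order given by the enumeration `L`) followed by `w`.
Adding the voters indexed by `S` yields the voter list `addElection`. -/
namespace AV

def wc (n : ℕ) : Sum (Fin n) Bool := Sum.inr true
def xc (n : ℕ) : Sum (Fin n) Bool := Sum.inr false

/-- The ballot of unregistered voter `wᵢ`. -/
def wballot {n : ℕ} (L : Fin n → List (Fin n)) (i : Fin n) : List (Sum (Fin n) Bool) :=
  (L i).map Sum.inl ++ [wc n]

/-- The voter list after adding the unregistered voters indexed by `S`. -/
def addElection {n : ℕ} (k : ℕ) (L : Fin n → List (Fin n)) (S : Finset (Fin n)) :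
    List (List (Sum (Fin n) Bool)) :=
  List.replicate (k - 1) [xc n] ++ (S.sort (· ≤ ·)).map (wballot L)

end AV

namespace FV

variable {α : Type*} [DecidableEq α]

theorem score_append (V W : List (List α)) (c : α) : score (V ++ W) c = score V c + score W c := by
  simp [score, List.filter_append]

theorem score_map_sort {ι : Type*} [LinearOrder ι] (S : Finset ι) (f : ι → List α) (c : α) :
    score ((S.sort (· ≤ ·)).map f) c = (S.filter (c ∈ f ·)).card := by
  rw [score, List.filter_map, List.length_map, Finset.card_def, Finset.filter_val,
    ← Finset.sort_eq S (· ≤ ·), Multiset.filter_coe, Multiset.coe_card]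
  rfl

theorem levelScore_le_score (V : List (List α)) (i : ℕ) (c : α) :
    levelScore V i c ≤ score V c := by
  simp only [levelScore, score, ← List.countP_eq_length_filter]
  exact List.countP_mono_left fun b _ h => by
    simpa using List.take_subset _ _ (by simpa using h)

theorem levelScore_eq_score_of_length_le {V : List (List α)} {i : ℕ}
    (hV : ∀ b ∈ V, b.length ≤ i) (c : α) : levelScore V i c = score V c := by
  unfold levelScore score
  rw [List.filter_congr fun b hb => by rw [List.take_of_length_le (hV b hb)]]

theorem not_majAt_zero (V : List (List α)) (c : α) : ¬ MajAt V 0 c := by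
  simp [MajAt, levelScore]

theorem not_majAt_of_two_mul_score_le {V : List (List α)} {c : α}
    (h : 2 * score V c ≤ V.length) (i : ℕ) : ¬ MajAt V i c := by
  have := levelScore_le_score V i c
  unfold MajAt
  omega

theorem uniqueFVWinner_of_majAt {Cs : Finset α} {V : List (List α)} {c : α} {i : ℕ}
    (hc : c ∈ Cs) (hi : i ≤ Cs.card) (hmaj : MajAt V i c)
    (hrival : ∀ d ∈ Cs, d ≠ c → ∀ j, ¬ MajAt V j d) : UniqueFVWinner Cs V c := by
  classical
  have hex : ∃ j, MajAt V j c := ⟨i, hmaj⟩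
  have hfirst_pos : 1 ≤ Nat.find hex := by
    by_contra! h0
    exact not_majAt_zero V c (by simpa [Nat.lt_one_iff.mp h0] using Nat.find_spec hex)
  refine ⟨⟨hc, Or.inl ⟨Nat.find hex, hfirst_pos, (Nat.find_min' hex hmaj).trans hi,
    Nat.find_spec hex, fun j hj d hd => ?_, fun d hd hdmaj => ?_⟩⟩, fun d hd => ?_⟩
  · by_cases hdc : d = c
    · exact hdc ▸ Nat.find_min hex hj
    · exact hrival d hd hdc j
  · by_cases hdc : d = c
    · rw [hdc]
    · exact absurd hdmaj (hrival d hd hdc _)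
  · by_contra hdc
    rcases hd.2 with ⟨j, -, -, hdmaj, -, -⟩ | ⟨hnone, -⟩
    · exact hrival d hd.1 hdc j hdmaj
    · exact hnone i hi c hc hmaj

end FV

namespace AV

variable {n k : ℕ} {L : Fin n → List (Fin n)} {S : Finset (Fin n)}

theorem length_addElection : (addElection k L S).length = (k - 1) + S.card := by
  simp [addElection]

theorem score_addElection_wc : FV.score (addElection k L S) (wc n) = S.card := by
  rw [addElection, FV.score_append, FV.score_map_sort]
  simp [FV.score, wballot, wc, xc]

theorem score_addElection_xc : FV.score (addElection k L S) (xc n) = k - 1 := by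
  rw [addElection, FV.score_append, FV.score_map_sort]
  simp [FV.score, wballot, wc, xc]

theorem score_addElection_inl (b : Fin n) :
    FV.score (addElection k L S) (Sum.inl b) = (S.filter (b ∈ L ·)).card := by
  rw [addElection, FV.score_append, FV.score_map_sort]
  simp [FV.score, wballot, wc, xc]

theorem score_addElection_inl_lt_card {b v : Fin n} (hv : v ∈ S) (hb : b ∉ L v) :
    FV.score (addElection k L S) (Sum.inl b) < S.card := by
  rw [score_addElection_inl]
  exact Finset.card_lt_card (Finset.filter_ssubset.2 ⟨v, hv, hb⟩)

theorem length_le_of_mem_addElection (hnd : ∀ i, (L i).Nodup) {b : List (Sum (Fin n) Bool)}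
    (hb : b ∈ addElection k L S) : b.length ≤ n + 1 := by
  simp only [addElection, List.mem_append, List.mem_replicate, List.mem_map] at hb
  rcases hb with ⟨-, rfl⟩ | ⟨i, -, rfl⟩
  · simp
  · simpa [wballot] using (hnd i).length_le_card

end AV

theorem fv_adding_voters_dominating_set_makes_w_win_general {n k : ℕ} (hk : 0 < k)
    (G : SimpleGraph (Fin n))
    (L : Fin n → List (Fin n))
    (hnd : ∀ i, (L i).Nodup)
    (hmem : ∀ i b, b ∈ L i ↔ ¬ (b = i ∨ G.Adj i b))
    (S : Finset (Fin n)) (hcard : S.card = k)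
    (hdom : ∀ u, ∃ v ∈ S, u = v ∨ G.Adj v u) :
    (AV.addElection k L S).length = 2 * k - 1 ∧
    FV.score (AV.addElection k L S) (AV.wc n) = k ∧
    2 * FV.score (AV.addElection k L S) (AV.wc n) > (AV.addElection k L S).length ∧
    (∀ c, c ≠ AV.wc n → FV.score (AV.addElection k L S) c ≤ k - 1) ∧
    FV.UniqueFVWinner Finset.univ (AV.addElection k L S) (AV.wc n) := by
  set V := AV.addElection k L S
  have hlen : V.length = 2 * k - 1 := by
    rw [AV.length_addElection, hcard]
    omega
  have hw : FV.score V (AV.wc n) = k := AV.score_addElection_wc.trans hcard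
  have hrival : ∀ c, c ≠ AV.wc n → FV.score V c ≤ k - 1 := by
    rintro (b | _ | _) hc
    · obtain ⟨v, hvS, hv⟩ := hdom b
      exact Nat.le_sub_one_of_lt
        (hcard ▸ AV.score_addElection_inl_lt_card hvS fun hb => (hmem v b).1 hb hv)
    · exact AV.score_addElection_xc.le
    · exact absurd rfl hc
  have hwmaj : FV.MajAt V (n + 1) (AV.wc n) := by
    rw [FV.MajAt, FV.levelScore_eq_score_of_length_le fun _ => AV.length_le_of_mem_addElection hnd,
      hw, hlen]
    omega
  refine ⟨hlen, hw, by omega, hrival, FV.uniqueFVWinner_of_majAt (Finset.mem_univ _) (by simp) hwmaj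
    fun d _ hd => FV.not_majAt_of_two_mul_score_le (by have := hrival d hd; omega)⟩

/-- adding the `k` unregistered voters corresponding to a
dominating set `S` of size `k` yields an election with `2k-1` voters in which
`w` has overall approval score `k` (a strict majority), every other candidate
has overall score at most `k-1`, and `w` is the unique fallback winner. -/
theorem fv_adding_voters_dominating_set_makes_w_win {n k : ℕ} (hk : 0 < k)
    (G : SimpleGraph (Fin n)) [DecidableRel G.Adj]
    (L : Fin n → List (Fin n))
    (hnd : ∀ i, (L i).Nodup)
    (hmem : ∀ i b, b ∈ L i ↔ ¬ (b = i ∨ G.Adj i b))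
    (S : Finset (Fin n)) (hcard : S.card = k)
    (hdom : ∀ u, ∃ v ∈ S, u = v ∨ G.Adj v u) :
    (AV.addElection k L S).length = 2 * k - 1 ∧
    FV.score (AV.addElection k L S) (AV.wc n) = k ∧
    2 * FV.score (AV.addElection k L S) (AV.wc n) > (AV.addElection k L S).length ∧
    (∀ c, c ≠ AV.wc n → FV.score (AV.addElection k L S) c ≤ k - 1) ∧
    FV.UniqueFVWinner Finset.univ (AV.addElection k L S) (AV.wc n) :=
  fv_adding_voters_dominating_set_makes_w_win_general hk G L hnd hmem S hcard hdom
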